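/- arXiv:1006.5864 — 3 statements merged into one kernel-verified Lean document; each statement's English description precedes it below -/
import Mathlib

section
/- For the cycle graph Cₙ (n ≥ 3) and any set partition π of its vertices that is neither discrete nor indiscrete, the cellule dimension d·|π| + (d−1)·δ(π, Cₙ) is strictly less than max(d·n, d + (d−1)·n), for all d ≥ 2. -/
/-! Every block of a partition of `Cₙ` into at least two blocks is left by some cut edge, so
there are at least `|π|` cut edges and `|π| + δ(π, Cₙ) ≤ n`; a non-discrete partition has
`|π| < n`. Hence `d·|π| + (d-1)·δ = |π| + (d-1)·(|π| + δ) < n + (d-1)·n = d·n`. -/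

open Finset

theorem Finset.card_image_univ_lt_of_not_injective {α β : Type*} [Fintype α] [DecidableEq β]
    {f : α → β} (hf : ¬ Function.Injective f) : #(univ.image f) < Fintype.card α := by
  refine (card_image_le.trans_eq card_univ).lt_of_ne fun h => hf fun x y hxy => ?_
  exact card_image_iff.mp (h.trans card_univ.symm) (mem_coe.2 (mem_univ x))
    (mem_coe.2 (mem_univ y)) hxy

namespace ZMod

variable {n : ℕ} [NeZero n] {α : Type*}

theorem forall_of_imp_add_one {P : ZMod n → Prop} (hstep : ∀ i, P i → P (i + 1)) {j : ZMod n}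
    (hj : P j) (x : ZMod n) : P x := by
  have hshift : ∀ t : ℕ, P (j + t) := by
    intro t
    induction t with
    | zero => simpa using hj
    | succ t ih => simpa [add_assoc] using hstep _ ih
  simpa using hshift (x - j).val

theorem exists_eq_and_ne_add_one {f : ZMod n → α} (hf : ¬ ∀ x y, f x = f y) (j : ZMod n) :
    ∃ i, f i = f j ∧ f i ≠ f (i + 1) := by
  by_contra! h
  have hconst : ∀ x, f x = f j :=
    forall_of_imp_add_one (P := fun i => f i = f j) (fun i hi => (h i hi).symm.trans hi) rfl
  exact hf fun x y => (hconst x).trans (hconst y).symm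

variable [DecidableEq α]

theorem card_image_le_card_filter_ne {f : ZMod n → α} (hf : ¬ ∀ x y, f x = f y) :
    #(univ.image f) ≤ #{i | f i ≠ f (i + 1)} :=
  calc #(univ.image f) ≤ #(({i | f i ≠ f (i + 1)} : Finset (ZMod n)).image f) := by
        refine card_le_card fun v hv => ?_
        obtain ⟨j, -, rfl⟩ := mem_image.mp hv
        obtain ⟨i, hij, hi⟩ := exists_eq_and_ne_add_one hf j
        exact mem_image.mpr ⟨i, by simpa using hi, hij⟩
    _ ≤ #{i | f i ≠ f (i + 1)} := card_image_le

theorem card_image_add_card_filter_eq_le {f : ZMod n → α} (hf : ¬ ∀ x y, f x = f y) :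
    #(univ.image f) + #{i | f i = f (i + 1)} ≤ n := by
  have hsplit := card_filter_add_card_filter_not (s := (univ : Finset (ZMod n)))
    (fun i => f i = f (i + 1))
  simp only [← ne_eq] at hsplit
  rw [card_univ, ZMod.card] at hsplit
  have := card_image_le_card_filter_ne hf
  omega

end ZMod

theorem cycle_middle_cellules_small_general (n d : ℕ) [NeZero n] (hd : 2 ≤ d)
    (f : ZMod n → ℕ)
    (hnotdiscrete : ¬ Function.Injective f)
    (hnotindiscrete : ¬ ∀ x y : ZMod n, f x = f y) :
    d * (Finset.univ.image f).card +
        (d - 1) * (Finset.univ.filter (fun i : ZMod n => f i = f (i + 1))).card <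
      max (d * n) (d + (d - 1) * n) := by
  set k := #(univ.image f)
  set δ := #{i : ZMod n | f i = f (i + 1)}
  have hkδ : k + δ ≤ n := ZMod.card_image_add_card_filter_eq_le hnotindiscrete
  have hk : k < n := by simpa using card_image_univ_lt_of_not_injective hnotdiscrete
  obtain ⟨e, rfl⟩ : ∃ e, d = e + 1 := ⟨d - 1, by omega⟩
  calc (e + 1) * k + (e + 1 - 1) * δ = k + e * (k + δ) := by
        simp only [add_tsub_cancel_right]; ring
    _ < n + e * n := Nat.add_lt_add_of_lt_of_le hk (Nat.mul_le_mul_left e hkδ)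
    _ = (e + 1) * n := by ring
    _ ≤ _ := le_max_left _ _

/-- for the cycle graph `Cₙ` (`n ≥ 3`, vertices `ZMod n`, edges `{i, i+1}`)
and any set partition of its vertex set (encoded as the fibers of a function `f`) that is
neither discrete (i.e. `f` injective) nor indiscrete (i.e. `f` constant), the cellule
dimension `d·|π| + (d-1)·δ(π, Cₙ)` is strictly less than `max(d·n, d + (d-1)·n)` for all
`d ≥ 2`.  Here `|π|` is the number of blocks and `δ(π, Cₙ)` the number of cycle edges with
both endpoints in one block. -/
theorem cycle_middle_cellules_small (n d : ℕ) [NeZero n] (hn : 3 ≤ n) (hd : 2 ≤ d)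
    (f : ZMod n → ℕ)
    (hnotdiscrete : ¬ Function.Injective f)
    (hnotindiscrete : ¬ ∀ x y : ZMod n, f x = f y) :
    d * (Finset.univ.image f).card +
        (d - 1) * (Finset.univ.filter (fun i : ZMod n => f i = f (i + 1))).card <
      max (d * n) (d + (d - 1) * n) :=
  cycle_middle_cellules_small_general n d hd f hnotdiscrete hnotindiscrete
end

section
/- Let G = K_{q₁,...,qₙ} be a complete multipartite graph, and π a partition of V(G) with 'ball-box' data b_{ij} = number of color-j vertices in block i. Then the cellule dimension equals d·(number of blocks) + (d−1)·Σᵢ Σ_{j<j'} b_{ij}·b_{ij'}. -/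
/-!
An edge inside a block joins vertices of different colours, so it is represented exactly once by
the ordered pair listing its endpoint of smaller colour first. Sorting these ordered pairs by
their block `i` and colours `j < j'` splits them into the products of the fibres
`{colour j, block i} × {colour j', block i}`, of sizes `b i j * b i j'`.
-/

open Finset

section ColoredPairs

variable {V ι κ : Type*} [Fintype V] [LinearOrder ι] [DecidableEq κ] (c : V → ι) (β : V → κ)

theorem card_sym2_heterochromatic_sameBlock_eq_card_pairs_lt [DecidableEq V] :
    #{e : Sym2 V | ∃ u v : V, e = s(u, v) ∧ c u ≠ c v ∧ β u = β v} =
      #{p : V × V | c p.1 < c p.2 ∧ β p.1 = β p.2} := by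
  symm
  refine card_bij (fun p _ => s(p.1, p.2)) ?_ ?_ ?_
  · intro p hp
    simp only [mem_filter, mem_univ, true_and] at hp ⊢
    exact ⟨p.1, p.2, rfl, hp.1.ne, hp.2⟩
  · intro p hp p' hp' h
    simp only [mem_filter, mem_univ, true_and] at hp hp'
    rcases Sym2.eq_iff.mp h with ⟨h₁, h₂⟩ | ⟨h₁, h₂⟩
    · exact Prod.ext h₁ h₂
    · rw [h₁, h₂] at hp
      exact absurd hp.1 hp'.1.not_gt
  · intro e he
    simp only [mem_filter, mem_univ, true_and] at he
    obtain ⟨u, v, rfl, hne, huv⟩ := he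
    rcases hne.lt_or_gt with h | h
    · exact ⟨(u, v), by simp [h, huv], rfl⟩
    · exact ⟨(v, u), by simp [h, huv.symm], Sym2.eq_swap⟩

theorem card_pairs_lt_sameBlock_eq_sum_mul_card [Fintype ι] [Fintype κ] :
    #{p : V × V | c p.1 < c p.2 ∧ β p.1 = β p.2} =
      ∑ i : κ, ∑ j : ι, ∑ j' with j < j',
        #{u | c u = j ∧ β u = i} * #{v | c v = j' ∧ β v = i} := by
  rw [card_eq_sum_card_fiberwise (f := fun p => (β p.1, c p.1, c p.2))
    (t := univ) (fun _ _ => mem_coe.mpr (mem_univ _))]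
  simp only [Fintype.sum_prod_type, sum_filter]
  refine sum_congr rfl fun i _ => sum_congr rfl fun j _ => sum_congr rfl fun j' _ => ?_
  split_ifs with hjj'
  · rw [← card_product, ← filter_product]
    congr 1
    ext ⟨u, v⟩
    simp only [mem_filter, mem_univ, true_and, mem_product, Prod.mk.injEq]
    constructor
    · rintro ⟨⟨-, hβ⟩, rfl, rfl, rfl⟩
      exact ⟨⟨rfl, rfl⟩, rfl, hβ.symm⟩
    · rintro ⟨⟨rfl, rfl⟩, rfl, hv⟩
      exact ⟨⟨hjj', hv.symm⟩, rfl, rfl, rfl⟩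
  · rw [card_eq_zero, filter_eq_empty_iff]
    rintro ⟨u, v⟩ huv ⟨-, rfl, rfl⟩
    exact hjj' (mem_filter.mp huv).2.1

end ColoredPairs

theorem card_fiber_sigmaMk_eq {n κ : Type*} {q : n → Type*} [Fintype n] [DecidableEq n]
    [∀ j, Fintype (q j)] [DecidableEq κ] (f : (Σ j, q j) → κ) (j : n) (i : κ) :
    #{a : q j | f ⟨j, a⟩ = i} = #{u : Σ j, q j | u.1 = j ∧ f u = i} := by
  rw [← card_map (Function.Embedding.sigmaMk j)]
  congr 1
  ext ⟨j', a⟩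
  simp only [mem_map, mem_filter, mem_univ, true_and, Function.Embedding.sigmaMk_apply,
    Sigma.mk.injEq]
  constructor
  · rintro ⟨b, hb, rfl, hab⟩
    exact ⟨rfl, eq_of_heq hab ▸ hb⟩
  · rintro ⟨rfl, ha⟩
    exact ⟨a, ha, rfl, HEq.rfl⟩

/-- let `G = K_{q₁,…,qₙ}` be the complete multipartite graph with vertex set
`Σ j, Fin (q j)` (a vertex `⟨j, a⟩` has color `j`), edges between vertices of different
colors, and let a partition of the vertices into `r` blocks be given by a block function
`β`.  With ball-box data `b i j = #{color-j vertices in block i}`, the cellule dimension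
`d·r + (d-1)·δ(π, G)` equals `d·r + (d-1)·Σᵢ Σ_{j<j'} b i j · b i j'`, where `δ(π, G)` is
the number of edges (heterochromatic unordered pairs) with both endpoints in one block. -/
theorem multipartite_cellule_dim (d n r : ℕ) (q : Fin n → ℕ)
    (β : (Σ j : Fin n, Fin (q j)) → Fin r) :
    d * r + (d - 1) *
        ((Finset.univ : Finset (Sym2 (Σ j : Fin n, Fin (q j)))).filter
          (fun e => ∃ u v : (Σ j : Fin n, Fin (q j)),
            e = s(u, v) ∧ u.1 ≠ v.1 ∧ β u = β v)).card =
      d * r + (d - 1) * ∑ i : Fin r, ∑ j : Fin n,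
        ∑ j' ∈ Finset.univ.filter (fun j' : Fin n => j < j'),
          (Finset.univ.filter (fun a : Fin (q j) => β ⟨j, a⟩ = i)).card *
            (Finset.univ.filter (fun a : Fin (q j') => β ⟨j', a⟩ = i)).card := by
  rw [card_sym2_heterochromatic_sameBlock_eq_card_pairs_lt Sigma.fst β,
    card_pairs_lt_sameBlock_eq_sum_mul_card Sigma.fst β]
  -- `Fin (q j)` is not a pattern for `?q ?j`, so the family must be given.
  simp only [card_fiber_sigmaMk_eq (q := fun j => Fin (q j))]
end

section
/- Let d ≥ 3 and let G = K_{q₁,...,qₙ} be complete multipartite with n ≥ 3 colors, or n = 2 with q₁ ≥ 3, q₂ ≥ 2. Then among all partitions π of V(G), the indiscrete partition (a single block) maximizes the quantity d·|π| + (d−1)·δ(π, G), where δ(π, G) is the number of edges internal to blocks of π. -/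
/-!
Let `k` be the number of blocks and `X` the number of edges joining different blocks. The
inequality reads `d (k - 1) ≤ (d - 1) X`, which for `d ≥ 3` follows from `3 (k - 1) ≤ 2 X`,
a lower bound for the degree sum of the graph of cut edges.

If no edge lies inside a block, every edge is cut and `k ≤ |V|`, so it suffices that
`2 |E| ≥ 3 (|V| - 1)`; this follows by splitting the degree sum between the part of a vertex
and its neighbourhood. Otherwise some block `P` contains an edge `xy`. As `G` is complete
multipartite, every vertex outside `P` is adjacent to `x` or `y`, so the vertices of `P` have
cut degree sum at least `k - 1`, and every other block has cut degree sum at least `2`: a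
singleton by the minimum degree, a larger block through one cut edge to `{x, y}` per vertex.

The conditions on `n` and the `qᵢ` are what make `K_{q₁,…,qₙ}` have minimum degree `2` and
satisfy `2 |E| ≥ 3 (|V| - 1)`.
-/

open scoped Classical

open Finset

lemma mul_le_add_sub_one_mul_of_three_mul_sub_one_le {d k X : ℕ} (hd : 3 ≤ d)
    (h : 3 * (k - 1) ≤ 2 * X) : d * k ≤ d + (d - 1) * X := by
  obtain ⟨e, rfl⟩ := Nat.exists_eq_add_of_le hd
  rcases k with _ | k
  · simp
  · rw [show 3 + e - 1 = e + 2 by omega]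
    simp only [Nat.add_sub_cancel] at h
    nlinarith

lemma Fin.exists_two_ne_of_three_le {n : ℕ} (h3 : 3 ≤ n) (j : Fin n) :
    ∃ i k : Fin n, i ≠ k ∧ i ≠ j ∧ k ≠ j := by
  obtain ⟨i, k, hi, hk, hik, hij, hkj⟩ : ∃ i k : ℕ, i < 3 ∧ k < 3 ∧ i ≠ k ∧ i ≠ j ∧ k ≠ j :=
    ⟨if (j : ℕ) = 0 then 1 else 0, if (j : ℕ) = 2 then 1 else 2, by split_ifs <;> omega⟩
  exact ⟨⟨i, by omega⟩, ⟨k, by omega⟩, by simpa [Fin.ext_iff] using hik,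
    by simpa [Fin.ext_iff] using hij, by simpa [Fin.ext_iff] using hkj⟩

lemma Sym2.exists_mk_eq_and_iff {V : Type*} {P : V → V → Prop} (hP : ∀ u v, P u v → P v u)
    {x y : V} : (∃ u v, s(x, y) = s(u, v) ∧ P u v) ↔ P x y := by
  refine ⟨?_, fun h => ⟨x, y, rfl, h⟩⟩
  rintro ⟨u, v, huv, h⟩
  rcases Sym2.eq_iff.mp huv with ⟨rfl, rfl⟩ | ⟨rfl, rfl⟩
  exacts [h, hP _ _ h]

namespace SimpleGraph

variable {V B : Type*} {G : SimpleGraph V}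

def cutGraph (G : SimpleGraph V) (β : V → B) : SimpleGraph V :=
  G ⊓ (⊤ : SimpleGraph B).comap β

@[simp] lemma cutGraph_adj {β : V → B} {u v : V} :
    (G.cutGraph β).Adj u v ↔ G.Adj u v ∧ β u ≠ β v := by
  simp [cutGraph]

namespace IsCompleteMultipartite

variable (hG : G.IsCompleteMultipartite)
include hG

lemma adj_of_not_adj_of_adj {a u v : V} (hu : ¬G.Adj a u) (hv : G.Adj a v) : G.Adj u v := by
  by_contra h
  exact hG.trans _ _ _ hu h hv

lemma cutGraph_adj_or_cutGraph_adj {β : V → B} {x y : V} (hxy : G.Adj x y) (hβ : β x = β y)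
    {u : V} (hu : β u ≠ β x) : (G.cutGraph β).Adj u x ∨ (G.cutGraph β).Adj u y := by
  by_cases hxu : G.Adj x u
  · exact .inl (cutGraph_adj.mpr ⟨hxu.symm, hu⟩)
  · exact .inr (cutGraph_adj.mpr ⟨hG.adj_of_not_adj_of_adj hxu hxy, by rwa [← hβ]⟩)

end IsCompleteMultipartite

variable [Fintype V]

/-- The partition `π` of the paper is encoded as the fibres of `β`. -/
def IsHeavy (G : SimpleGraph V) (d : ℕ) : Prop :=
  ∀ β : V → ℕ, d * #(univ.image β) + (d - 1) *
      #{e : Sym2 V | ∃ u v, e = s(u, v) ∧ G.Adj u v ∧ β u = β v} ≤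
    d + (d - 1) * #{e : Sym2 V | ∃ u v, e = s(u, v) ∧ G.Adj u v}

lemma card_edges_eq_card_internal_add_card_cut [DecidableEq B] (β : V → B) :
    #{e : Sym2 V | ∃ u v, e = s(u, v) ∧ G.Adj u v} =
      #{e : Sym2 V | ∃ u v, e = s(u, v) ∧ G.Adj u v ∧ β u = β v} +
        #(G.cutGraph β).edgeFinset := by
  rw [← card_filter_add_card_filter_not (fun e : Sym2 V => ∃ u v, e = s(u, v) ∧ β u = β v)]
  congr 2 <;> ext e <;> induction e using Sym2.ind with
  | _ x y =>
    simp only [mem_filter, mem_univ, true_and, mem_edgeFinset, mem_edgeSet, cutGraph_adj,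
      Sym2.exists_mk_eq_and_iff (P := G.Adj) (fun _ _ h => h.symm),
      Sym2.exists_mk_eq_and_iff (P := fun u v => β u = β v) (fun _ _ h => h.symm),
      Sym2.exists_mk_eq_and_iff (P := fun u v => G.Adj u v ∧ β u = β v)
        (fun _ _ h => ⟨h.1.symm, h.2.symm⟩)]

variable [DecidableRel G.Adj]

lemma two_le_degree_of_adj {v a b : V} (ha : G.Adj v a) (hb : G.Adj v b) (hab : a ≠ b) :
    2 ≤ G.degree v := by
  rw [← card_neighborFinset_eq_degree]
  exact one_lt_card.mpr ⟨a, by simpa using ha, b, by simpa using hb, hab⟩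

lemma degree_le_degree_cutGraph {β : V → B} {u : V} (hu : ∀ w, G.Adj u w → β u ≠ β w) :
    G.degree u ≤ (G.cutGraph β).degree u := by
  simp only [← card_neighborFinset_eq_degree]
  refine card_le_card fun w hw => ?_
  rw [mem_neighborFinset] at hw ⊢
  exact ⟨hw, hu w hw⟩

namespace IsCompleteMultipartite

variable (hG : G.IsCompleteMultipartite)
include hG

lemma degree_le_degree_of_not_adj {a u : V} (h : ¬G.Adj a u) : G.degree a ≤ G.degree u := by
  simp only [← card_neighborFinset_eq_degree]
  refine card_le_card fun v hv => ?_
  simp only [mem_neighborFinset] at hv ⊢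
  exact hG.adj_of_not_adj_of_adj h hv

variable [DecidableEq V]

lemma compl_neighborFinset_subset_neighborFinset {a u : V} (h : G.Adj a u) :
    (G.neighborFinset a)ᶜ ⊆ G.neighborFinset u := fun w hw => by
  simp only [mem_compl, mem_neighborFinset] at hw ⊢
  exact (hG.adj_of_not_adj_of_adj hw h).symm

lemma card_compl_neighborFinset_le_degree {a u : V} (h : G.Adj a u) :
    #(G.neighborFinset a)ᶜ ≤ G.degree u := by
  rw [← card_neighborFinset_eq_degree]
  exact card_le_card (hG.compl_neighborFinset_subset_neighborFinset h)

lemma card_compl_neighborFinset_lt_degree {a b c u : V} (hb : G.Adj a b) (hc : G.Adj a c)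
    (hbc : G.Adj b c) (h : G.Adj a u) : #(G.neighborFinset a)ᶜ < G.degree u := by
  obtain ⟨w, haw, huw⟩ : ∃ w, G.Adj a w ∧ G.Adj u w := by
    by_cases hub : G.Adj u b
    · exact ⟨b, hb, hub⟩
    · exact ⟨c, hc, hG.adj_of_not_adj_of_adj (fun h' => hub h'.symm) hbc⟩
  rw [← card_neighborFinset_eq_degree]
  exact card_lt_card <| (ssubset_iff_of_subset (hG.compl_neighborFinset_subset_neighborFinset h)).mpr
    ⟨w, by simpa using huw, by simpa using haw⟩

lemma le_sum_degree_of_forall_adj {a : V} {m : ℕ}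
    (hm : ∀ u, G.Adj a u → #(G.neighborFinset a)ᶜ + m ≤ G.degree u) :
    #(G.neighborFinset a)ᶜ * G.degree a + G.degree a * (#(G.neighborFinset a)ᶜ + m) ≤
      ∑ u, G.degree u := by
  have hcompl : #(G.neighborFinset a)ᶜ • G.degree a ≤ ∑ u ∈ (G.neighborFinset a)ᶜ, G.degree u :=
    card_nsmul_le_sum _ _ _ fun u hu => hG.degree_le_degree_of_not_adj (by simpa using hu)
  have hnbr : #(G.neighborFinset a) • (#(G.neighborFinset a)ᶜ + m) ≤
      ∑ u ∈ G.neighborFinset a, G.degree u :=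
    card_nsmul_le_sum _ _ _ fun u hu => hm u (by simpa using hu)
  rw [smul_eq_mul] at hcompl hnbr
  rw [card_neighborFinset_eq_degree] at hnbr
  rw [← sum_add_sum_compl (G.neighborFinset a)]
  omega

lemma three_mul_card_sub_one_le_sum_degree_of_adj {a b c : V} (hb : G.Adj a b)
    (hc : G.Adj a c) (hbc : G.Adj b c) : 3 * (Fintype.card V - 1) ≤ ∑ u, G.degree u := by
  have hsum := hG.le_sum_degree_of_forall_adj (m := 1) fun u hu =>
    hG.card_compl_neighborFinset_lt_degree hb hc hbc hu
  have hcard : Fintype.card V = #(G.neighborFinset a)ᶜ + G.degree a := by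
    rw [card_compl, card_neighborFinset_eq_degree, Nat.sub_add_cancel (G.degree_lt_card_verts a).le]
  have hs : 1 ≤ #(G.neighborFinset a)ᶜ := card_pos.mpr ⟨a, by simp⟩
  have ht : 2 ≤ G.degree a := two_le_degree_of_adj hb hc hbc.ne
  rw [hcard]
  zify [show 1 ≤ #(G.neighborFinset a)ᶜ + G.degree a by omega] at hsum hs ht ⊢
  nlinarith

lemma three_mul_card_sub_one_le_sum_degree_of_two_lt_card {a : V}
    (hs : 2 < #(G.neighborFinset a)ᶜ) (ht : 2 ≤ G.degree a) :
    3 * (Fintype.card V - 1) ≤ ∑ u, G.degree u := by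
  have hsum := hG.le_sum_degree_of_forall_adj (a := a) (m := 0) fun u hu =>
    hG.card_compl_neighborFinset_le_degree hu
  have hcard : Fintype.card V = #(G.neighborFinset a)ᶜ + G.degree a := by
    rw [card_compl, card_neighborFinset_eq_degree, Nat.sub_add_cancel (G.degree_lt_card_verts a).le]
  rw [hcard]
  zify [show 1 ≤ #(G.neighborFinset a)ᶜ + G.degree a by omega] at hsum hs ht ⊢
  nlinarith

section Cut

variable [DecidableEq B] {β : V → B} {x y : V}

omit [DecidableRel G.Adj] in
lemma card_image_sub_one_le_cutGraph_degree_add_degree (hxy : G.Adj x y) (hβ : β x = β y) :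
    #(univ.image β) - 1 ≤ (G.cutGraph β).degree x + (G.cutGraph β).degree y := by
  have hsub : (univ.image β).erase (β x) ⊆ ({v | β v ≠ β x} : Finset V).image β := by
    intro b hb
    obtain ⟨hbx, v, -, rfl⟩ := by simpa using hb
    exact mem_image.mpr ⟨v, by simpa using hbx, rfl⟩
  have hcover : ({v | β v ≠ β x} : Finset V) ⊆
      (G.cutGraph β).neighborFinset x ∪ (G.cutGraph β).neighborFinset y := fun v hv => by
    rcases hG.cutGraph_adj_or_cutGraph_adj hxy hβ (by simpa using hv) with h | h
    exacts [mem_union_left _ (by simpa using h.symm), mem_union_right _ (by simpa using h.symm)]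
  calc #(univ.image β) - 1 = #((univ.image β).erase (β x)) := by
        rw [card_erase_of_mem (mem_image_of_mem β (mem_univ x))]
    _ ≤ #({v | β v ≠ β x} : Finset V) := (card_le_card hsub).trans card_image_le
    _ ≤ _ := by
      simpa only [card_neighborFinset_eq_degree] using
        (card_le_card hcover).trans (card_union_le _ _)

lemma two_le_sum_cutGraph_degree_fiber (hdeg : ∀ v, 2 ≤ G.degree v) (hxy : G.Adj x y)
    (hβ : β x = β y) {b : B} (hb : b ∈ univ.image β) (hbx : b ≠ β x) :
    2 ≤ ∑ v ∈ {v | β v = b}, (G.cutGraph β).degree v := by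
  obtain ⟨u, -, rfl⟩ := mem_image.mp hb
  have hpos : ∀ v, β v = β u → 0 < (G.cutGraph β).degree v := fun v hv => by
    rw [degree_pos_iff_exists_adj]
    rcases hG.cutGraph_adj_or_cutGraph_adj hxy hβ (hv ▸ hbx) with h | h
    exacts [⟨x, h⟩, ⟨y, h⟩]
  by_cases hsingle : ∀ w, β w = β u → w = u
  · calc 2 ≤ G.degree u := hdeg u
      _ ≤ (G.cutGraph β).degree u := degree_le_degree_cutGraph fun w huw hβw =>
          huw.ne (hsingle w hβw.symm).symm
      _ ≤ _ := single_le_sum (f := fun v => (G.cutGraph β).degree v) (fun _ _ => Nat.zero_le _)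
          (by simp)
  · obtain ⟨w, hw, hwu⟩ : ∃ w, β w = β u ∧ w ≠ u := by simpa using hsingle
    calc 2 ≤ (G.cutGraph β).degree u + (G.cutGraph β).degree w := by
          have := hpos u rfl; have := hpos w hw; omega
      _ = ∑ v ∈ {u, w}, (G.cutGraph β).degree v := by rw [sum_pair hwu.symm]
      _ ≤ _ := sum_le_sum_of_subset (by intro v hv; rcases mem_insert.mp hv with rfl | hv <;> simp_all)

theorem three_mul_card_image_sub_one_le_sum_degree_cutGraph (hdeg : ∀ v, 2 ≤ G.degree v)
    (hsum : 3 * (Fintype.card V - 1) ≤ ∑ v, G.degree v) (β : V → B) :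
    3 * (#(univ.image β) - 1) ≤ ∑ v, (G.cutGraph β).degree v := by
  by_cases hmono : ∀ u v, G.Adj u v → β u ≠ β v
  · calc 3 * (#(univ.image β) - 1) ≤ 3 * (Fintype.card V - 1) := by
          gcongr; exact card_image_le.trans_eq card_univ
      _ ≤ ∑ v, G.degree v := hsum
      _ ≤ _ := sum_le_sum fun u _ => degree_le_degree_cutGraph (hmono u)
  obtain ⟨x, y, hxy, hβ⟩ : ∃ x y, G.Adj x y ∧ β x = β y := by simpa using hmono
  have hx : β x ∈ univ.image β := mem_image_of_mem β (mem_univ x)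
  have hblock : (G.cutGraph β).degree x + (G.cutGraph β).degree y ≤
      ∑ v ∈ {v | β v = β x}, (G.cutGraph β).degree v := by
    rw [← sum_pair (f := fun v => (G.cutGraph β).degree v) hxy.ne]
    exact sum_le_sum_of_subset (by intro v hv; rcases mem_insert.mp hv with rfl | hv <;> simp_all)
  have hothers := card_nsmul_le_sum ((univ.image β).erase (β x))
    (fun b => ∑ v ∈ {v | β v = b}, (G.cutGraph β).degree v) 2 fun b hb =>
      hG.two_le_sum_cutGraph_degree_fiber hdeg hxy hβ (mem_of_mem_erase hb) (ne_of_mem_erase hb)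
  rw [smul_eq_mul, card_erase_of_mem hx] at hothers
  have := hG.card_image_sub_one_le_cutGraph_degree_add_degree hxy hβ
  rw [← sum_fiberwise_of_maps_to (fun v _ => mem_image_of_mem β (mem_univ v)),
    ← add_sum_erase _ _ hx]
  omega

end Cut

theorem isHeavy (hdeg : ∀ v, 2 ≤ G.degree v)
    (hsum : 3 * (Fintype.card V - 1) ≤ ∑ v, G.degree v) {d : ℕ} (hd : 3 ≤ d) : G.IsHeavy d := by
  intro β
  have hcut := hG.three_mul_card_image_sub_one_le_sum_degree_cutGraph hdeg hsum β
  rw [sum_degrees_eq_twice_card_edges] at hcut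
  rw [card_edges_eq_card_internal_add_card_cut β, mul_add]
  have := mul_le_add_sub_one_mul_of_three_mul_sub_one_le hd hcut
  omega

end IsCompleteMultipartite

namespace completeMultipartiteGraph

variable {n : ℕ} {q : Fin n → ℕ}

lemma two_le_degree_of_three_le (h3 : 3 ≤ n) (hq : ∀ j, 0 < q j) (v : Σ j, Fin (q j)) :
    2 ≤ (completeMultipartiteGraph fun j => Fin (q j)).degree v := by
  obtain ⟨i, k, hik, hi, hk⟩ := Fin.exists_two_ne_of_three_le h3 v.1
  exact two_le_degree_of_adj (a := ⟨i, 0, hq i⟩) (b := ⟨k, 0, hq k⟩) (by simpa using hi.symm)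
    (by simpa using hk.symm) fun h => hik (congrArg Sigma.fst h)

lemma two_le_degree_of_two_le (hn : 2 ≤ n) (hq : ∀ j, 2 ≤ q j) (v : Σ j, Fin (q j)) :
    2 ≤ (completeMultipartiteGraph fun j => Fin (q j)).degree v := by
  have : Nontrivial (Fin n) := Fin.nontrivial_iff_two_le.mpr hn
  obtain ⟨j, hj⟩ := exists_ne v.1
  exact two_le_degree_of_adj (a := ⟨j, 0, by have := hq j; omega⟩) (b := ⟨j, 1, hq j⟩)
    (by simpa using hj.symm) (by simpa using hj.symm) (by simp)

lemma three_mul_card_sub_one_le_sum_degree_of_three_le (h3 : 3 ≤ n) (hq : ∀ j, 0 < q j) :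
    3 * (Fintype.card (Σ j, Fin (q j)) - 1) ≤
      ∑ v, (completeMultipartiteGraph fun j => Fin (q j)).degree v :=
  (isCompleteMultipartite _).three_mul_card_sub_one_le_sum_degree_of_adj
    (a := ⟨⟨0, by omega⟩, 0, hq _⟩) (b := ⟨⟨1, by omega⟩, 0, hq _⟩) (c := ⟨⟨2, by omega⟩, 0, hq _⟩)
    (by simp) (by simp) (by simp)

lemma three_mul_card_sub_one_le_sum_degree_of_three_le_of_two_le {j₀ j₁ : Fin n} (hj : j₀ ≠ j₁)
    (h₀ : 3 ≤ q j₀) (h₁ : 2 ≤ q j₁) :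
    3 * (Fintype.card (Σ j, Fin (q j)) - 1) ≤
      ∑ v, (completeMultipartiteGraph fun j => Fin (q j)).degree v := by
  refine (isCompleteMultipartite _).three_mul_card_sub_one_le_sum_degree_of_two_lt_card
    (a := ⟨j₀, 0, by omega⟩) (two_lt_card.mpr ?_) (two_le_degree_of_adj (a := ⟨j₁, 0, by omega⟩)
      (b := ⟨j₁, 1, by omega⟩) (by simpa using hj) (by simpa using hj) (by simp))
  exact ⟨⟨j₀, 0, by omega⟩, by simp, ⟨j₀, 1, by omega⟩, by simp, ⟨j₀, 2, by omega⟩, by simp,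
    by simp, by simp, by simp⟩

theorem isHeavy {d : ℕ} (hd : 3 ≤ d) (hq : ∀ j, 0 < q j)
    (hcase : 3 ≤ n ∨ (n = 2 ∧ ∀ j : Fin n, ((j : ℕ) = 0 → 3 ≤ q j) ∧ ((j : ℕ) = 1 → 2 ≤ q j))) :
    (completeMultipartiteGraph fun j => Fin (q j)).IsHeavy d := by
  refine (isCompleteMultipartite _).isHeavy ?_ ?_ hd
  all_goals rcases hcase with h3 | ⟨rfl, h2⟩
  · exact two_le_degree_of_three_le h3 hq
  · refine two_le_degree_of_two_le le_rfl fun j => ?_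
    fin_cases j
    exacts [((h2 0).1 rfl).trans' (by omega), (h2 1).2 rfl]
  · exact three_mul_card_sub_one_le_sum_degree_of_three_le h3 hq
  · exact three_mul_card_sub_one_le_sum_degree_of_three_le_of_two_le (by decide)
      ((h2 0).1 rfl) ((h2 1).2 rfl)

end completeMultipartiteGraph

end SimpleGraph

theorem multipartite_d_heavy_general (d n : ℕ) (q : Fin n → ℕ) (hd : 3 ≤ d)
    (hq : ∀ j, 0 < q j)
    (hcase : 3 ≤ n ∨ (n = 2 ∧ ∀ j : Fin n, ((j : ℕ) = 0 → 3 ≤ q j) ∧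
      ((j : ℕ) = 1 → 2 ≤ q j)))
    (β : (Σ j : Fin n, Fin (q j)) → ℕ) :
    d * (Finset.univ.image β).card + (d - 1) *
        ((Finset.univ : Finset (Sym2 (Σ j : Fin n, Fin (q j)))).filter
          (fun e => ∃ u v : (Σ j : Fin n, Fin (q j)),
            e = s(u, v) ∧ u.1 ≠ v.1 ∧ β u = β v)).card ≤
      d + (d - 1) *
        ((Finset.univ : Finset (Sym2 (Σ j : Fin n, Fin (q j)))).filter
          (fun e => ∃ u v : (Σ j : Fin n, Fin (q j)),
            e = s(u, v) ∧ u.1 ≠ v.1)).card := by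
  -- `convert` only has to reconcile the decidability instances of the two filters.
  convert SimpleGraph.completeMultipartiteGraph.isHeavy hd hq hcase β

/-- let `d ≥ 3` and let `G = K_{q₁,…,qₙ}` be the complete multipartite graph
(vertex set `Σ j, Fin (q j)`, vertices of different colors adjacent) with color class sizes
`q₁ ≥ ⋯ ≥ qₙ > 0`, where either `n ≥ 3`, or `n = 2` with `q₁ ≥ 3` and `q₂ ≥ 2`.  Then among
all partitions `π` of `V(G)` (encoded as the fibers of a block function `β`), the
indiscrete partition maximizes `d·|π| + (d-1)·δ(π, G)`: every cellule dimension is at most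
`d + (d-1)·|E(G)|`, where `δ(π, G)` counts edges internal to blocks of `π` and `|E(G)|` is
the total number of heterochromatic unordered pairs. -/
theorem multipartite_d_heavy (d n : ℕ) (q : Fin n → ℕ) (hd : 3 ≤ d)
    (hq : ∀ j, 0 < q j) (hsorted : Antitone q)
    (hcase : 3 ≤ n ∨ (n = 2 ∧ ∀ j : Fin n, ((j : ℕ) = 0 → 3 ≤ q j) ∧
      ((j : ℕ) = 1 → 2 ≤ q j)))
    (β : (Σ j : Fin n, Fin (q j)) → ℕ) :
    d * (Finset.univ.image β).card + (d - 1) *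
        ((Finset.univ : Finset (Sym2 (Σ j : Fin n, Fin (q j)))).filter
          (fun e => ∃ u v : (Σ j : Fin n, Fin (q j)),
            e = s(u, v) ∧ u.1 ≠ v.1 ∧ β u = β v)).card ≤
      d + (d - 1) *
        ((Finset.univ : Finset (Sym2 (Σ j : Fin n, Fin (q j)))).filter
          (fun e => ∃ u v : (Σ j : Fin n, Fin (q j)),
            e = s(u, v) ∧ u.1 ≠ v.1)).card :=
  multipartite_d_heavy_general d n q hd hq hcase β
end
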